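/- arXiv:1410.2934 — 2 statements merged into one kernel-verified Lean document; each statement's English description precedes it below -/
import Mathlib

section
/- Let β <_c α be compositions, ν a partition of |α//β|, and τ ∈ LRRCT^l_ν(α//β). Then rect(stan(τ)) = τ_ν, the canonical standard reverse composition tableau of shape ν. -/
open Finset

/-- A composition is a (finite) list of positive integers. -/
def IsComposition (α : List ℕ) : Prop := ∀ a ∈ α, 0 < a

/-- A partition is a weakly decreasing composition. -/
def IsPartitionL (ν : List ℕ) : Prop := IsComposition ν ∧ ν.Pairwise (· ≥ ·)

/-- `tilde α` is the partition obtained by sorting the parts of `α` decreasingly. -/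
def tilde (α : List ℕ) : List ℕ := α.insertionSort (· ≥ ·)

/-- The cover relation `β ⋖_c α` of the reverse composition poset `𝓛_c`:
either a new part `1` is prepended, or some part `β_j` is replaced by `β_j + 1`
where no earlier part equals `β_j`. -/
def CoverC (β α : List ℕ) : Prop :=
  α = 1 :: β ∨
    ∃ j < β.length, (∀ i < j, β.getD i 0 ≠ β.getD j 0) ∧ α = β.set j (β.getD j 0 + 1)

/-- `β <_c α` : the strict order of the reverse composition poset `𝓛_c`. -/
def LtC (β α : List ℕ) : Prop := Relation.TransGen CoverC β α

/-- The (reverse composition, resp. Young) diagram of `α`: the cell `(i,j)`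
(0-indexed; `i` the row from the top, `j` the column from the left) is present
iff `j < α_i`.  Rows are left-justified. -/
def cdiag (α : List ℕ) : Finset (ℕ × ℕ) :=
  (Finset.range α.length ×ˢ Finset.range α.sum).filter fun c => c.2 < α.getD c.1 0

/-- The inner shape `β` drawn in the bottom-left corner of (the diagram of) `α`. -/
def innerDiag (α β : List ℕ) : Finset (ℕ × ℕ) :=
  (cdiag β).image fun c => (c.1 + (α.length - β.length), c.2)

/-- The skew reverse composition shape `α//β`. -/
def skewDiag (α β : List ℕ) : Finset (ℕ × ℕ) := cdiag α \ innerDiag α β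

/-- A semistandard reverse composition tableau (SSRCT) of shape `α//β`, encoded
as a filling `τ : ℕ × ℕ → ℕ` which is zero off the shape, positive on the shape,
with rows weakly decreasing left to right, the leftmost column strictly
increasing top to bottom, and satisfying the triple condition. -/
structure IsSSRCT (α β : List ℕ) (τ : ℕ × ℕ → ℕ) : Prop where
  zero_off : ∀ c, c ∉ skewDiag α β → τ c = 0
  pos_on : ∀ c ∈ skewDiag α β, 0 < τ c
  row_weak : ∀ i j, (i, j) ∈ skewDiag α β → (i, j + 1) ∈ skewDiag α β →
      τ (i, j + 1) ≤ τ (i, j)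
  col_strict : ∀ i₁ i₂, i₁ < i₂ → (i₁, 0) ∈ skewDiag α β → (i₂, 0) ∈ skewDiag α β →
      τ (i₁, 0) < τ (i₂, 0)
  triple : ∀ i j k, i < j → (j, k + 1) ∈ skewDiag α β →
      ((i, k) ∈ innerDiag α β ∨ ((i, k) ∈ skewDiag α β ∧ τ (j, k + 1) ≤ τ (i, k))) →
      ((i, k + 1) ∈ innerDiag α β ∨
        ((i, k + 1) ∈ skewDiag α β ∧ τ (j, k + 1) < τ (i, k + 1)))

/-- A standard reverse composition tableau: an SSRCT whose filling is a bijection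
onto `{1, …, |α//β|}`. -/
def IsSRCT (α β : List ℕ) (τ : ℕ × ℕ → ℕ) : Prop :=
  IsSSRCT α β τ ∧ Set.BijOn τ ↑(skewDiag α β) (Set.Icc 1 (skewDiag α β).card)

/-- The content of the filling `τ` of the cells `s` is the composition `ν`,
i.e. the entry `i+1` occurs exactly `ν_{i+1}` times (0-indexed: `ν.getD i 0`). -/
def HasContent (s : Finset (ℕ × ℕ)) (τ : ℕ × ℕ → ℕ) (ν : List ℕ) : Prop :=
  ∀ i, (s.filter fun c => τ c = i + 1).card = ν.getD i 0

/-- `e` is the exponent of the monomial `x^τ` associated to the filling `τ` of `s`,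
where the entry `m` corresponds to the variable indexed `m - 1`. -/
def HasExponent (s : Finset (ℕ × ℕ)) (τ : ℕ × ℕ → ℕ) (e : ℕ →₀ ℕ) : Prop :=
  ∀ v, (s.filter fun c => τ c = v + 1).card = e v

/-- The skew quasisymmetric Schur function `𝒮_{α//β} = Σ_{τ ∈ SSRCT(α//β)} x^τ`,
defined coefficientwise: the coefficient of `x^e` is the number of SSRCT of shape
`α//β` with exponent `e`. -/
noncomputable def skewQS (α β : List ℕ) : MvPowerSeries ℕ ℚ :=
  fun e => (({τ | IsSSRCT α β τ ∧ HasExponent (skewDiag α β) τ e} :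
    Set (ℕ × ℕ → ℕ)).ncard : ℚ)

/-- The quasisymmetric Schur function `𝒮_α := 𝒮_{α//∅}`. -/
noncomputable def QS (α : List ℕ) : MvPowerSeries ℕ ℚ := skewQS α []

/-- The skew Young diagram `λ/μ` (inner shape in the top-left corner). -/
def skewYoungDiag (lam mu : List ℕ) : Finset (ℕ × ℕ) := cdiag lam \ cdiag mu

/-- A semistandard reverse tableau (SSRT) of skew Young shape `λ/μ`: rows weakly
decrease left to right, columns strictly decrease top to bottom. -/
structure IsSSRT (lam mu : List ℕ) (T : ℕ × ℕ → ℕ) : Prop where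
  zero_off : ∀ c, c ∉ skewYoungDiag lam mu → T c = 0
  pos_on : ∀ c ∈ skewYoungDiag lam mu, 0 < T c
  row_weak : ∀ i j, (i, j) ∈ skewYoungDiag lam mu → (i, j + 1) ∈ skewYoungDiag lam mu →
      T (i, j + 1) ≤ T (i, j)
  col_strict : ∀ i j, (i, j) ∈ skewYoungDiag lam mu → (i + 1, j) ∈ skewYoungDiag lam mu →
      T (i + 1, j) < T (i, j)

/-- The skew Schur function `s_{λ/μ} = Σ_{T ∈ SSRT(λ/μ)} x^T`, defined
coefficientwise. -/
noncomputable def skewSchur (lam mu : List ℕ) : MvPowerSeries ℕ ℚ :=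
  fun e => (({T | IsSSRT lam mu T ∧ HasExponent (skewYoungDiag lam mu) T e} :
    Set (ℕ × ℕ → ℕ)).ncard : ℚ)

/-- The Schur function `s_λ := s_{λ/∅}`. -/
noncomputable def schurPS (lam : List ℕ) : MvPowerSeries ℕ ℚ := skewSchur lam []

/-- A power series is a symmetric function iff it is invariant under every
permutation of the variables. -/
def IsSymmFn (f : MvPowerSeries ℕ ℚ) : Prop :=
  ∀ σ : Equiv.Perm ℕ, ∀ e : ℕ →₀ ℕ,
    MvPowerSeries.coeff (e.equivMapDomain σ) f = MvPowerSeries.coeff e f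

/-- The left lattice condition: for every `i ≥ 1` and every `k`, the `k`-th `i`
from the left is weakly left of the `k`-th `i+1` from the left.  (Equivalently,
in every set of columns `≤ x` there are at least as many entries `i` as entries
`i+1`; recall that in an SSRCT equal entries lie in distinct columns.) -/
def LeftLatticeCond (s : Finset (ℕ × ℕ)) (τ : ℕ × ℕ → ℕ) : Prop :=
  ∀ i, 1 ≤ i → ∀ x,
    (s.filter fun c => τ c = i + 1 ∧ c.2 ≤ x).card ≤
      (s.filter fun c => τ c = i ∧ c.2 ≤ x).card

/-- The right lattice condition: for every `i ≥ 1` and every `k`, the `k`-th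
`i+1` from the right is weakly right of the `k`-th `i` from the right. -/
def RightLatticeCond (s : Finset (ℕ × ℕ)) (τ : ℕ × ℕ → ℕ) : Prop :=
  ∀ i, 1 ≤ i → ∀ x,
    (s.filter fun c => τ c = i ∧ x ≤ c.2).card ≤
      (s.filter fun c => τ c = i + 1 ∧ x ≤ c.2).card

/-- Left Littlewood–Richardson reverse composition tableaux of shape `α//β`. -/
def LRRCTl (α β : List ℕ) : Set (ℕ × ℕ → ℕ) :=
  {τ | IsSSRCT α β τ ∧ LeftLatticeCond (skewDiag α β) τ}

/-- `LRRCT^l_ν(α//β)`: those with content `ν`. -/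
def LRRCTlnu (α β ν : List ℕ) : Set (ℕ × ℕ → ℕ) :=
  {τ ∈ LRRCTl α β | HasContent (skewDiag α β) τ ν}

/-- Right Littlewood–Richardson reverse composition tableaux of shape `α//β`. -/
def LRRCTr (α β : List ℕ) : Set (ℕ × ℕ → ℕ) :=
  {τ | IsSSRCT α β τ ∧ RightLatticeCond (skewDiag α β) τ}

/-- `LRRCT^r_δ(α//β)`: those with content `δ`. -/
def LRRCTrnu (α β δ : List ℕ) : Set (ℕ × ℕ → ℕ) :=
  {τ ∈ LRRCTr α β | HasContent (skewDiag α β) τ δ}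

/-- Left Littlewood–Richardson reverse tableaux of shape `λ/μ`. -/
def LRRTl (lam mu : List ℕ) : Set (ℕ × ℕ → ℕ) :=
  {T | IsSSRT lam mu T ∧ LeftLatticeCond (skewYoungDiag lam mu) T}

/-- Right Littlewood–Richardson reverse tableaux of shape `λ/μ`. -/
def LRRTr (lam mu : List ℕ) : Set (ℕ × ℕ → ℕ) :=
  {T | IsSSRT lam mu T ∧ RightLatticeCond (skewYoungDiag lam mu) T}

/-- Standardization of the filling `τ` of `s`: for each value in turn, its
occurrences are relabelled from right to left by the next consecutive integers.
(The cell `c` receives the number of entries smaller than `τ c` plus the number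
of entries equal to `τ c` lying weakly to the right of `c`.) -/
def stanF (s : Finset (ℕ × ℕ)) (τ : ℕ × ℕ → ℕ) : ℕ × ℕ → ℕ := fun c =>
  if c ∈ s then
    (s.filter fun d => τ d < τ c).card + (s.filter fun d => τ d = τ c ∧ c.2 ≤ d.2).card
  else 0

/-- Place a new one-cell row containing `k` so that the leftmost column remains
strictly increasing top to bottom. -/
def insertNewRow (k : ℕ) : List (List ℕ) → List (List ℕ)
  | [] => [[k]]
  | row :: rest => if k < row.headD 0 then [k] :: row :: rest else row :: insertNewRow k rest

/-- One step of Mason's insertion: scan the positions of the (1-indexed) column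
`j ≥ 2`, top to bottom, with current value `k`.  Either `k` is placed at the end
of a row of length `j - 1` whose last entry is weakly larger (and we stop),
or `k` bumps a smaller entry `k₂` in column `j` whose left neighbour is weakly
larger than `k` (and we continue down the column with `k₂`); otherwise the value
is carried to the next column to the left (`some k` is returned). -/
def scanCol (j : ℕ) : ℕ → List (List ℕ) → List (List ℕ) × Option ℕ
  | k, [] => ([], some k)
  | k, row :: rest =>
    if row.length + 1 = j ∧ 2 ≤ j ∧ k ≤ row.getD (j - 2) 0 then
      ((row ++ [k]) :: rest, none)
    else if j ≤ row.length ∧ row.getD (j - 1) 0 < k ∧ k ≤ row.getD (j - 2) 0 then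
      let p := scanCol j (row.getD (j - 1) 0) rest
      (row.set (j - 1) k :: p.1, p.2)
    else
      let p := scanCol j k rest
      (row :: p.1, p.2)

/-- Scan columns `j, j-1, …, 2` in turn; a value reaching the leftmost column is
placed as a new one-cell row. -/
def scanCols : ℕ → ℕ → List (List ℕ) → List (List ℕ)
  | 0, k, T => insertNewRow k T
  | 1, k, T => insertNewRow k T
  | j + 2, k, T =>
    match scanCol (j + 2) k T with
    | (T', none) => T'
    | (T', some k') => scanCols (j + 1) k' T'

/-- Mason's insertion `k → T` of a value into an SSRCT of straight shape, the
tableau represented as its list of rows (top to bottom): scanning starts at the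
top of column `r + 1` where `r` is the length of the longest row. -/
def masonInsert (k : ℕ) (T : List (List ℕ)) : List (List ℕ) :=
  scanCols ((T.map List.length).foldr max 0 + 1) k T

/-- The entries of column `j` of the filling `τ` of `s`, in increasing order. -/
def colEntries (s : Finset (ℕ × ℕ)) (τ : ℕ × ℕ → ℕ) (j : ℕ) : List ℕ :=
  ((s.filter fun c => c.2 = j).image τ).sort (· ≤ ·)

/-- The insertion word of the first `j` columns: columns taken from left to
right, each column's entries in increasing order. -/
def rectWord (s : Finset (ℕ × ℕ)) (τ : ℕ × ℕ → ℕ) (j : ℕ) : List ℕ :=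
  (List.range j).flatMap (colEntries s τ)

/-- The intermediate tableau `τ^j` in the rectification: the entries of the
first `j` columns inserted into an initially empty tableau. -/
def rectPartial (s : Finset (ℕ × ℕ)) (τ : ℕ × ℕ → ℕ) (j : ℕ) : List (List ℕ) :=
  (rectWord s τ j).foldl (fun T k => masonInsert k T) []

/-- The rectification `rect(τ)` of a filling of `s`, as a list of rows. -/
def rectRows (s : Finset (ℕ × ℕ)) (τ : ℕ × ℕ → ℕ) : List (List ℕ) :=
  rectPartial s τ (s.sup fun c => c.2 + 1)

/-- Rows of the canonical SRCT `τ_ν`: row `i` (0-indexed) contains the integers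
from `ν₁ + ⋯ + ν_{i+1}` down to `1 + ν₁ + ⋯ + ν_i`, left to right. -/
def canonRowsAux : List ℕ → ℕ → List (List ℕ)
  | [], _ => []
  | a :: rest, sm => ((List.range a).map fun t => sm + a - t) :: canonRowsAux rest (sm + a)

/-- The canonical SRCT `τ_ν` of shape `ν`, as a list of rows. -/
def canonRows (ν : List ℕ) : List (List ℕ) := canonRowsAux ν 0

/-- The number of cells of the inner Young shape `β̃` in column `j`. -/
def innerColCount (β : List ℕ) (j : ℕ) : ℕ :=
  ((cdiag (tilde β)).filter fun c => c.2 = j).card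

/-- The bijection `ρ_β` sending an SSRCT of shape `γ//β` to an SSRT of shape
`γ̃/β̃`: the entries of each column are written in decreasing order and
top-justified below the inner shape `β̃`. -/
def rhoMap (β γ : List ℕ) (τ : ℕ × ℕ → ℕ) : ℕ × ℕ → ℕ := fun c =>
  if c.1 < innerColCount β c.2 then 0
  else (((((skewDiag γ β).filter fun d => d.2 = c.2).image τ).sort (· ≤ ·)).reverse).getD
        (c.1 - innerColCount β c.2) 0

/-- The composition recording the number of cells in each nonempty row of
`α//β`, read from top to bottom. -/
def rowComp (α β : List ℕ) : List ℕ :=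
  ((List.range α.length).map fun i => ((skewDiag α β).filter fun c => c.1 = i).card).filter
    fun x => x ≠ 0

/-!
Write `ℓ_J(i)` for the number of entries `i` of `τ` in its first `J` columns. An SSRCT has no
repeated entry in a column, so standardization turns the entry `i` of column `J` into
`ν₁ + ⋯ + ν_i - ℓ_J(i)`, and these labels increase with `i`. After the first `J` columns have
been inserted, `rect` is the canonical tableau `τ_ν` with row `i` cut down to its first `ℓ_J(i)`
cells, so the label of `i` is exactly the next entry of row `i` of `τ_ν`. Inserting it appends it
to row `i`: by the left lattice condition the rows above are already strictly longer and the rows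
below are no longer, so Mason's scan passes every other row. When all columns are read,
`ℓ(i) = ν_i` and the tableau is `τ_ν`.
-/

namespace RectStan

section MasonScan

/-- Neither branch of `scanCol j k` applies to `row`: the scan moves past it unchanged. -/
def ScanPasses (j k : ℕ) (row : List ℕ) : Prop :=
  ¬(row.length + 1 = j ∧ 2 ≤ j ∧ k ≤ row.getD (j - 2) 0) ∧
    ¬(j ≤ row.length ∧ row.getD (j - 1) 0 < k ∧ k ≤ row.getD (j - 2) 0)

variable {j k : ℕ} {row : List ℕ}

lemma scanPasses_of_forall_getD_lt (h : ∀ t, row.getD t 0 < k) : ScanPasses j k row :=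
  ⟨fun ⟨_, _, hk⟩ => (h _).not_ge hk, fun ⟨_, _, hk⟩ => (h _).not_ge hk⟩

lemma scanPasses_of_length_lt (h : row.length + 1 < j) : ScanPasses j k row :=
  ⟨fun ⟨h', _⟩ => by omega, fun ⟨h', _⟩ => by omega⟩

lemma scanCol_of_forall_scanPasses :
    ∀ {T : List (List ℕ)}, (∀ row ∈ T, ScanPasses j k row) → scanCol j k T = (T, some k)
  | [], _ => rfl
  | row :: rest, h => by
    obtain ⟨h₁, h₂⟩ := h row List.mem_cons_self
    rw [scanCol, if_neg h₁, if_neg h₂,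
      scanCol_of_forall_scanPasses fun r hr => h r (List.mem_cons_of_mem _ hr)]

lemma insertNewRow_of_forall_headD_lt :
    ∀ {T : List (List ℕ)}, (∀ row ∈ T, row.headD 0 < k) → insertNewRow k T = T ++ [[k]]
  | [], _ => rfl
  | row :: rest, h => by
    rw [insertNewRow, if_neg (lt_asymm (h row List.mem_cons_self)),
      insertNewRow_of_forall_headD_lt fun r hr => h r (List.mem_cons_of_mem _ hr)]
    rfl

lemma scanCols_eq_of_scanPasses {T : List (List ℕ)} {j₁ : ℕ} (hj₁ : 1 ≤ j₁) :
    ∀ {j : ℕ}, j₁ ≤ j → (∀ j', j₁ < j' → j' ≤ j → ∀ row ∈ T, ScanPasses j' k row) →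
      scanCols j k T = scanCols j₁ k T
  | 0, h, _ => by omega
  | j + 1, h, hpass => by
    rcases h.eq_or_lt with rfl | hlt
    · rfl
    obtain ⟨j, rfl⟩ : ∃ j', j = j' + 1 := ⟨j - 1, by omega⟩
    rw [scanCols, scanCol_of_forall_scanPasses (hpass _ hlt le_rfl)]
    exact scanCols_eq_of_scanPasses hj₁ (by omega) fun j' h₁ h₂ => hpass j' h₁ (by omega)

end MasonScan

section PrefixRows

lemma sum_take_succ_eq_add_getD (ν : List ℕ) (n : ℕ) :
    (ν.take (n + 1)).sum = (ν.take n).sum + ν.getD n 0 := by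
  rcases lt_or_ge n ν.length with h | h
  · rw [List.sum_take_succ _ _ h, List.getD_eq_getElem _ _ h]
  · rw [List.take_of_length_le h, List.take_of_length_le (by omega),
      List.getD_eq_default _ _ h, add_zero]

def descRange (top l : ℕ) : List ℕ := (List.range l).map (top - ·)

@[simp] lemma length_descRange (top l : ℕ) : (descRange top l).length = l := by
  simp [descRange]

lemma getD_descRange_le (top l t : ℕ) : (descRange top l).getD t 0 ≤ top := by
  rcases lt_or_ge t l with h | h
  · simp [descRange, h]
  · simp [descRange, h.not_gt]

lemma headD_descRange_le (top l : ℕ) : (descRange top l).headD 0 ≤ top := by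
  cases l <;> simp [descRange, List.range_succ_eq_map]

lemma getD_descRange (top l t : ℕ) (h : t < l) : (descRange top l).getD t 0 = top - t := by
  simp [descRange, h]

lemma descRange_succ (top l : ℕ) : descRange top (l + 1) = descRange top l ++ [top - l] := by
  simp [descRange, List.range_succ]

/-- Row `p` of the canonical tableau of `ν`, with all entries raised by `sm`, truncated to its
first `ℓ p` entries; rows that become empty are dropped. -/
def prefixRows : List ℕ → (ℕ → ℕ) → ℕ → List (List ℕ)
  | [], _, _ => []
  | a :: ν, ℓ, sm =>
    if ℓ 0 = 0 then prefixRows ν (fun p => ℓ (p + 1)) (sm + a)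
    else descRange (sm + a) (ℓ 0) :: prefixRows ν (fun p => ℓ (p + 1)) (sm + a)

lemma update_succ_comp_succ (ℓ : ℕ → ℕ) (i v : ℕ) :
    (fun p => Function.update ℓ (i + 1) v (p + 1)) = Function.update (fun p => ℓ (p + 1)) i v := by
  funext p
  simp only [Function.update_apply, add_left_inj]

lemma update_zero_comp_succ (ℓ : ℕ → ℕ) (v : ℕ) :
    (fun p => Function.update ℓ 0 v (p + 1)) = fun p => ℓ (p + 1) := by
  funext p
  simp

lemma mem_prefixRows {row : List ℕ} :
    ∀ {ν : List ℕ} {ℓ : ℕ → ℕ} {sm : ℕ}, row ∈ prefixRows ν ℓ sm ↔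
      ∃ p < ν.length, ℓ p ≠ 0 ∧ descRange (sm + (ν.take (p + 1)).sum) (ℓ p) = row
  | [], _, _ => by simp [prefixRows]
  | a :: ν, ℓ, sm => by
    have ih := @mem_prefixRows row ν (fun p => ℓ (p + 1)) (sm + a)
    simp only [List.length_cons, List.take_succ_cons, List.sum_cons, ← add_assoc] at ih ⊢
    constructor
    · intro h
      rw [prefixRows] at h
      split_ifs at h with h0
      · obtain ⟨p, hp, hne, rfl⟩ := ih.1 h
        exact ⟨p + 1, by omega, hne, rfl⟩
      · rcases List.mem_cons.1 h with rfl | h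
        · exact ⟨0, by omega, h0, by simp⟩
        · obtain ⟨p, hp, hne, rfl⟩ := ih.1 h
          exact ⟨p + 1, by omega, hne, rfl⟩
    · rintro ⟨p, hp, hne, rfl⟩
      rw [prefixRows]
      rcases p with _ | p
      · rw [if_neg hne]
        simp
      · have := ih.2 ⟨p, by omega, hne, rfl⟩
        split_ifs
        · exact this
        · exact List.mem_cons_of_mem _ this

lemma prefixRows_eq_nil :
    ∀ {ν : List ℕ} {ℓ : ℕ → ℕ} {sm : ℕ}, (∀ p < ν.length, ℓ p = 0) → prefixRows ν ℓ sm = []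
  | [], _, _, _ => rfl
  | a :: ν, ℓ, sm, h => by
    rw [prefixRows, if_pos (h 0 (by simp))]
    exact prefixRows_eq_nil fun p hp => h (p + 1) (by simpa using hp)

lemma prefixRows_update_eq_append :
    ∀ {ν : List ℕ} {ℓ : ℕ → ℕ} {sm i : ℕ}, i < ν.length →
      (∀ q, i ≤ q → q < ν.length → ℓ q = 0) →
      prefixRows ν (Function.update ℓ i 1) sm = prefixRows ν ℓ sm ++ [[sm + (ν.take (i + 1)).sum]]
  | [], _, _, _, hi, _ => by simp at hi
  | a :: ν, ℓ, sm, 0, _, h => by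
    rw [prefixRows, prefixRows, if_pos (h 0 le_rfl (by simp)), update_zero_comp_succ,
      prefixRows_eq_nil fun p hp => h (p + 1) (by omega) (by simpa using hp)]
    simp [descRange]
  | a :: ν, ℓ, sm, i + 1, hi, h => by
    have ih := @prefixRows_update_eq_append ν (fun p => ℓ (p + 1)) (sm + a) i
      (by simpa using hi) fun q hq hq' => h (q + 1) (by omega) (by simpa using hq')
    rw [prefixRows, prefixRows, update_succ_comp_succ, ih, Function.update_of_ne (by omega)]
    simp only [List.take_succ_cons, List.sum_cons, ← add_assoc]
    split_ifs <;> simp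

lemma scanCol_prefixRows :
    ∀ {ν : List ℕ} {ℓ : ℕ → ℕ} {sm i : ℕ}, i < ν.length → (∀ p < i, ℓ i < ℓ p) → 0 < ℓ i →
      ℓ i < ν.getD i 0 →
      scanCol (ℓ i + 1) (sm + (ν.take (i + 1)).sum - ℓ i) (prefixRows ν ℓ sm) =
        (prefixRows ν (Function.update ℓ i (ℓ i + 1)) sm, none)
  | [], _, _, _, hi, _, _, _ => by simp at hi
  | a :: ν, ℓ, sm, 0, _, _, hpos, hlt => by
    simp only [List.getD_cons_zero] at hlt
    have hk : sm + ((a :: ν).take (0 + 1)).sum - ℓ 0 = sm + a - ℓ 0 := by simp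
    have hfits : sm + a - ℓ 0 ≤ (descRange (sm + a) (ℓ 0)).getD (ℓ 0 + 1 - 2) 0 := by
      rw [getD_descRange _ _ _ (by omega)]
      omega
    rw [prefixRows, prefixRows, if_neg hpos.ne', Function.update_self, if_neg (by omega),
      update_zero_comp_succ, hk, scanCol, if_pos ⟨by simp, by omega, hfits⟩, descRange_succ]
  | a :: ν, ℓ, sm, i + 1, hi, habove, hpos, hlt => by
    have h0 : ℓ (i + 1) < ℓ 0 := habove 0 (by omega)
    simp only [List.getD_cons_succ] at hlt
    have hk : sm + ((a :: ν).take (i + 1 + 1)).sum - ℓ (i + 1) =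
        sm + a + (ν.take (i + 1)).sum - ℓ (i + 1) := by
      simp only [List.take_succ_cons, List.sum_cons]
      omega
    have hbig : sm + a < sm + a + (ν.take (i + 1)).sum - ℓ (i + 1) := by
      rw [sum_take_succ_eq_add_getD]
      omega
    have ih := @scanCol_prefixRows ν (fun p => ℓ (p + 1)) (sm + a) i (by simpa using hi)
      (fun p hp => habove (p + 1) (by omega)) hpos hlt
    rw [prefixRows, prefixRows, if_neg (by omega), Function.update_of_ne (by omega),
      if_neg (by omega), update_succ_comp_succ, hk, scanCol, if_neg ?_, if_neg ?_, ih]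
    · rintro ⟨-, -, hle⟩
      have := getD_descRange_le (sm + a) (ℓ 0) (ℓ (i + 1) + 1 - 2)
      omega
    · rintro ⟨hlen, -⟩
      simp only [length_descRange] at hlen
      omega

lemma scanPasses_of_mem_prefixRows {ν : List ℕ} {ℓ : ℕ → ℕ} {sm i j k : ℕ} {row : List ℕ}
    (hbelow : ∀ q, i < q → q < ν.length → ℓ q ≤ ℓ i) (hk : sm + (ν.take i).sum < k)
    (hj : ℓ i + 1 < j) (hrow : row ∈ prefixRows ν ℓ sm) : ScanPasses j k row := by
  obtain ⟨p, hp, -, rfl⟩ := mem_prefixRows.1 hrow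
  rcases lt_or_ge p i with hpi | hpi
  · refine scanPasses_of_forall_getD_lt fun t => ?_
    have := getD_descRange_le (sm + (ν.take (p + 1)).sum) (ℓ p) t
    have : (ν.take (p + 1)).sum ≤ (ν.take i).sum := List.monotone_sum_take ν hpi
    omega
  · refine scanPasses_of_length_lt ?_
    have : ℓ p ≤ ℓ i := hpi.eq_or_lt.elim (fun h => h ▸ le_rfl) (hbelow p · hp)
    simp only [length_descRange]
    omega

lemma headD_lt_of_mem_prefixRows {ν : List ℕ} {ℓ : ℕ → ℕ} {sm i k : ℕ} {row : List ℕ}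
    (hzero : ∀ q, i ≤ q → q < ν.length → ℓ q = 0) (hk : sm + (ν.take i).sum < k)
    (hrow : row ∈ prefixRows ν ℓ sm) : row.headD 0 < k := by
  obtain ⟨p, hp, hne, rfl⟩ := mem_prefixRows.1 hrow
  have hpi : p < i := by
    by_contra! h
    exact hne (hzero p h hp)
  have : (ν.take (p + 1)).sum ≤ (ν.take i).sum := List.monotone_sum_take ν hpi
  have := headD_descRange_le (sm + (ν.take (p + 1)).sum) (ℓ p)
  omega

lemma masonInsert_prefixRows {ν : List ℕ} {ℓ : ℕ → ℕ} {sm i : ℕ} (hi : i < ν.length)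
    (habove : ∀ p < i, ℓ i < ℓ p) (hbelow : ∀ q, i < q → q < ν.length → ℓ q ≤ ℓ i)
    (hlt : ℓ i < ν.getD i 0) :
    masonInsert (sm + (ν.take (i + 1)).sum - ℓ i) (prefixRows ν ℓ sm) =
      prefixRows ν (Function.update ℓ i (ℓ i + 1)) sm := by
  have hk : sm + (ν.take i).sum < sm + (ν.take (i + 1)).sum - ℓ i := by
    rw [sum_take_succ_eq_add_getD]
    omega
  have hwidth : ℓ i ≤ ((prefixRows ν ℓ sm).map List.length).foldr max 0 := by
    rcases Nat.eq_zero_or_pos (ℓ i) with h0 | h0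
    · omega
    · have hmem := (mem_prefixRows (sm := sm)).2 ⟨i, hi, h0.ne', rfl⟩
      simpa using List.le_max_of_le (List.mem_map_of_mem (f := List.length) hmem) le_rfl
  rw [masonInsert, scanCols_eq_of_scanPasses (j₁ := ℓ i + 1) (by omega) (by omega)
    fun j hj _ _ => scanPasses_of_mem_prefixRows hbelow hk hj]
  rcases Nat.eq_zero_or_pos (ℓ i) with h0 | h0
  · have hzero : ∀ q, i ≤ q → q < ν.length → ℓ q = 0 := fun q hq hq' =>
      hq.eq_or_lt.elim (fun h => h ▸ h0) fun h => Nat.le_zero.1 (h0 ▸ hbelow q h hq')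
    rw [h0, zero_add, Nat.sub_zero, scanCols, prefixRows_update_eq_append hi hzero,
      insertNewRow_of_forall_headD_lt fun _ => headD_lt_of_mem_prefixRows hzero (by omega)]
  · obtain ⟨j, hj⟩ : ∃ j, ℓ i + 1 = j + 2 := ⟨ℓ i - 1, by omega⟩
    have happ := scanCol_prefixRows (sm := sm) hi habove h0 hlt
    rw [hj] at happ ⊢
    rw [scanCols, happ]

lemma prefixRows_getD_eq_canonRowsAux :
    ∀ {ν : List ℕ} {sm : ℕ}, IsComposition ν → prefixRows ν (ν.getD · 0) sm = canonRowsAux ν sm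
  | [], _, _ => rfl
  | a :: ν, sm, hν => by
    rw [prefixRows, canonRowsAux, List.getD_cons_zero, if_neg (hν a List.mem_cons_self).ne']
    simp only [List.getD_cons_succ]
    exact congrArg _ (prefixRows_getD_eq_canonRowsAux fun b hb => hν b (List.mem_cons_of_mem _ hb))

end PrefixRows

section Counting

variable {s : Finset (ℕ × ℕ)} {τ : ℕ × ℕ → ℕ} {ν : List ℕ}

def countLeft (s : Finset (ℕ × ℕ)) (τ : ℕ × ℕ → ℕ) (v J : ℕ) : ℕ :=
  (s.filter fun c => τ c = v ∧ c.2 < J).card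

def cellsAt (s : Finset (ℕ × ℕ)) (τ : ℕ × ℕ → ℕ) (v j : ℕ) : Finset (ℕ × ℕ) :=
  s.filter fun c => τ c = v ∧ c.2 = j

@[simp] lemma countLeft_zero (v : ℕ) : countLeft s τ v 0 = 0 := by
  simp [countLeft]

lemma countLeft_succ (v J : ℕ) :
    countLeft s τ v (J + 1) = countLeft s τ v J + (cellsAt s τ v J).card := by
  rw [countLeft, countLeft, cellsAt, ← Finset.card_union_of_disjoint
    (Finset.disjoint_filter.2 fun c _ h₁ h₂ => by omega), ← Finset.filter_or]
  congr 1
  exact Finset.filter_congr fun c _ => by omega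

lemma card_cellsAt_le_one (hinj : Set.InjOn (fun c => (τ c, c.2)) s) (v j : ℕ) :
    (cellsAt s τ v j).card ≤ 1 :=
  Finset.card_le_one.2 fun c hc d hd => by
    simp only [cellsAt, Finset.mem_filter] at hc hd
    exact hinj hc.1 hd.1 (Prod.ext (hc.2.1.trans hd.2.1.symm) (hc.2.2.trans hd.2.2.symm))

lemma countLeft_le_getD (hcont : HasContent s τ ν) (p J : ℕ) :
    countLeft s τ (p + 1) J ≤ ν.getD p 0 :=
  hcont p ▸ Finset.card_le_card (Finset.monotone_filter_right s fun _ _ h => h.1)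

lemma countLeft_lt_getD (hcont : HasContent s τ ν) {p J : ℕ}
    (h : (cellsAt s τ (p + 1) J).Nonempty) : countLeft s τ (p + 1) J < ν.getD p 0 := by
  have := countLeft_le_getD hcont p (J + 1)
  rw [countLeft_succ] at this
  have := h.card_pos
  omega

lemma countLeft_eq_getD (hcont : HasContent s τ ν) {J : ℕ} (hJ : ∀ c ∈ s, c.2 < J) (p : ℕ) :
    countLeft s τ (p + 1) J = ν.getD p 0 := by
  rw [← hcont p, countLeft]
  exact congrArg _ (Finset.filter_congr fun c hc => and_iff_left (hJ c hc))

lemma countLeft_antitone (hlat : LeftLatticeCond s τ) {i i' : ℕ} (hi : 1 ≤ i) (h : i ≤ i')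
    (J : ℕ) : countLeft s τ i' J ≤ countLeft s τ i J := by
  induction i', h using Nat.le_induction with
  | base => exact le_rfl
  | succ n hn ih =>
    refine le_trans ?_ ih
    rcases J with _ | J
    · simp
    · simp only [countLeft, Nat.lt_succ_iff]
      exact hlat n (hi.trans hn) J

end Counting

section Standardization

variable {s : Finset (ℕ × ℕ)} {τ : ℕ × ℕ → ℕ} {ν : List ℕ}

lemma card_filter_lt_eq_sum_take (hpos : ∀ c ∈ s, 0 < τ c) (hcont : HasContent s τ ν) (n : ℕ) :
    (s.filter fun d => τ d < n + 1).card = (ν.take n).sum := by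
  induction n with
  | zero =>
    simpa [Finset.filter_eq_empty_iff] using fun c hc => (hpos c hc).ne'
  | succ n ih =>
    rw [sum_take_succ_eq_add_getD, ← ih, ← hcont n, ← Finset.card_union_of_disjoint
      (Finset.disjoint_filter.2 fun c _ h₁ h₂ => by omega), ← Finset.filter_or]
    exact congrArg _ (Finset.filter_congr fun c _ => by omega)

lemma lt_length_of_content (hcont : HasContent s τ ν) {c : ℕ × ℕ} (hc : c ∈ s) {i : ℕ}
    (hτ : τ c = i + 1) : i < ν.length := by
  by_contra h
  have := hcont i
  rw [List.getD_eq_default _ _ (not_lt.1 h), Finset.card_eq_zero,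
    Finset.filter_eq_empty_iff] at this
  exact this hc hτ

def stanLabel (s : Finset (ℕ × ℕ)) (τ : ℕ × ℕ → ℕ) (ν : List ℕ) (v j : ℕ) : ℕ :=
  (ν.take v).sum - countLeft s τ v j

lemma stanF_eq_stanLabel (hpos : ∀ c ∈ s, 0 < τ c) (hcont : HasContent s τ ν) {c : ℕ × ℕ}
    (hc : c ∈ s) {i : ℕ} (hτ : τ c = i + 1) : stanF s τ c = stanLabel s τ ν (i + 1) c.2 := by
  have hsplit : (s.filter fun d => τ d = i + 1 ∧ c.2 ≤ d.2).card + countLeft s τ (i + 1) c.2 =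
      ν.getD i 0 := by
    rw [← hcont i, countLeft, ← Finset.card_union_of_disjoint
      (Finset.disjoint_filter.2 fun d _ h₁ h₂ => by omega), ← Finset.filter_or]
    exact congrArg _ (Finset.filter_congr fun d _ => by omega)
  rw [stanF, if_pos hc, hτ, card_filter_lt_eq_sum_take hpos hcont, stanLabel,
    sum_take_succ_eq_add_getD]
  omega

def columnLabels (s : Finset (ℕ × ℕ)) (τ : ℕ × ℕ → ℕ) (ν : List ℕ) (j n : ℕ) : List ℕ :=
  ((List.range n).filter fun p => (cellsAt s τ (p + 1) j).Nonempty).map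
    fun p => stanLabel s τ ν (p + 1) j

lemma stanLabel_mem_Ioc (hcont : HasContent s τ ν) {p j : ℕ}
    (h : (cellsAt s τ (p + 1) j).Nonempty) :
    stanLabel s τ ν (p + 1) j ∈ Set.Ioc (ν.take p).sum (ν.take (p + 1)).sum := by
  have := countLeft_lt_getD hcont h
  rw [stanLabel, sum_take_succ_eq_add_getD]
  constructor <;> omega

lemma pairwise_lt_columnLabels (hcont : HasContent s τ ν) (j n : ℕ) :
    (columnLabels s τ ν j n).Pairwise (· < ·) := by
  rw [columnLabels, List.pairwise_map, List.pairwise_filter]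
  refine List.pairwise_lt_range.imp fun {a b} hab ha hb => ?_
  calc stanLabel s τ ν (a + 1) j
      ≤ (ν.take (a + 1)).sum := (stanLabel_mem_Ioc hcont (of_decide_eq_true ha)).2
    _ ≤ (ν.take b).sum := List.monotone_sum_take ν hab
    _ < stanLabel s τ ν (b + 1) j := (stanLabel_mem_Ioc hcont (of_decide_eq_true hb)).1

lemma colEntries_stanF (hpos : ∀ c ∈ s, 0 < τ c) (hcont : HasContent s τ ν) (j : ℕ) :
    colEntries s (stanF s τ) j = columnLabels s τ ν j ν.length := by
  have hsorted := pairwise_lt_columnLabels hcont j ν.length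
  rw [colEntries, ← (List.toFinset_sort (· ≤ ·) (hsorted.imp ne_of_lt)).2 (hsorted.imp le_of_lt)]
  congr 1
  ext x
  simp only [columnLabels, Finset.mem_image, Finset.mem_filter, List.mem_toFinset, List.mem_map,
    List.mem_filter, List.mem_range, decide_eq_true_eq]
  constructor
  · rintro ⟨c, ⟨hc, rfl⟩, rfl⟩
    obtain ⟨i, hτ⟩ : ∃ i, τ c = i + 1 := ⟨τ c - 1, by have := hpos c hc; omega⟩
    exact ⟨i, ⟨lt_length_of_content hcont hc hτ, c, by simp [cellsAt, hc, hτ]⟩,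
      (stanF_eq_stanLabel hpos hcont hc hτ).symm⟩
  · rintro ⟨p, ⟨-, c, hc⟩, rfl⟩
    simp only [cellsAt, Finset.mem_filter] at hc
    exact ⟨c, ⟨hc.1, hc.2.2⟩, hc.2.2 ▸ stanF_eq_stanLabel hpos hcont hc.1 hc.2.1⟩

end Standardization

section Rectification

variable {s : Finset (ℕ × ℕ)} {τ : ℕ × ℕ → ℕ} {ν : List ℕ}

/-- The row lengths of the partial rectification once the entries `1, …, t` of column `J` have
been inserted. -/
def countsDuringColumn (s : Finset (ℕ × ℕ)) (τ : ℕ × ℕ → ℕ) (J t : ℕ) : ℕ → ℕ := fun p =>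
  if p < t then countLeft s τ (p + 1) (J + 1) else countLeft s τ (p + 1) J

lemma countsDuringColumn_zero (J : ℕ) :
    countsDuringColumn s τ J 0 = fun p => countLeft s τ (p + 1) J := by
  funext p
  simp [countsDuringColumn]

lemma countsDuringColumn_succ (J t : ℕ) :
    countsDuringColumn s τ J (t + 1) = Function.update (countsDuringColumn s τ J t) t
      (countsDuringColumn s τ J t t + (cellsAt s τ (t + 1) J).card) := by
  funext p
  rcases lt_trichotomy p t with h | rfl | h
  · simp [countsDuringColumn, Function.update_of_ne h.ne, h, h.trans (Nat.lt_succ_self t)]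
  · simp [countsDuringColumn, countLeft_succ]
  · simp [countsDuringColumn, Function.update_of_ne h.ne', h.not_gt, Nat.succ_le_of_lt h |>.not_gt]

lemma countsDuringColumn_length (hcont : HasContent s τ ν) (J : ℕ) :
    countsDuringColumn s τ J ν.length = fun p => countLeft s τ (p + 1) (J + 1) := by
  funext p
  rw [countsDuringColumn]
  split_ifs with hp
  · rfl
  · have h₁ := countLeft_le_getD hcont p J
    have h₂ := countLeft_le_getD hcont p (J + 1)
    rw [List.getD_eq_default _ _ (not_lt.1 hp)] at h₁ h₂
    omega

lemma masonInsert_stanLabel (hinj : Set.InjOn (fun c => (τ c, c.2)) s)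
    (hcont : HasContent s τ ν) (hlat : LeftLatticeCond s τ) {J t : ℕ} (ht : t < ν.length)
    (hocc : (cellsAt s τ (t + 1) J).Nonempty) :
    masonInsert (stanLabel s τ ν (t + 1) J) (prefixRows ν (countsDuringColumn s τ J t) 0) =
      prefixRows ν (countsDuringColumn s τ J (t + 1)) 0 := by
  have hcard : (cellsAt s τ (t + 1) J).card = 1 :=
    le_antisymm (card_cellsAt_le_one hinj _ _) hocc.card_pos
  have hstep : countLeft s τ (t + 1) (J + 1) = countLeft s τ (t + 1) J + 1 := by
    rw [countLeft_succ, hcard]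
  have hℓt : countsDuringColumn s τ J t t = countLeft s τ (t + 1) J := by
    simp [countsDuringColumn]
  have habove : ∀ p < t, countsDuringColumn s τ J t t < countsDuringColumn s τ J t p := by
    intro p hp
    have := countLeft_antitone hlat (i := p + 1) (i' := t + 1) (by omega) (by omega) (J + 1)
    rw [hℓt]
    simp only [countsDuringColumn, if_pos hp]
    omega
  have hbelow : ∀ q, t < q → q < ν.length →
      countsDuringColumn s τ J t q ≤ countsDuringColumn s τ J t t := by
    intro q hq _
    rw [hℓt]
    simp only [countsDuringColumn, if_neg hq.not_gt]
    exact countLeft_antitone hlat (by omega) (by omega) J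
  have hlt : countsDuringColumn s τ J t t < ν.getD t 0 := hℓt ▸ countLeft_lt_getD hcont hocc
  have hlabel : stanLabel s τ ν (t + 1) J =
      0 + (ν.take (t + 1)).sum - countsDuringColumn s τ J t t := by
    rw [hℓt, stanLabel, zero_add]
  rw [hlabel, masonInsert_prefixRows ht habove hbelow hlt, countsDuringColumn_succ, hcard]

lemma columnLabels_succ (J t : ℕ) :
    columnLabels s τ ν J (t + 1) = columnLabels s τ ν J t ++
      if (cellsAt s τ (t + 1) J).Nonempty then [stanLabel s τ ν (t + 1) J] else [] := by
  rw [columnLabels, columnLabels, List.range_succ, List.filter_append, List.map_append]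
  split_ifs with h <;> simp [h]

lemma foldl_masonInsert_columnLabels (hinj : Set.InjOn (fun c => (τ c, c.2)) s)
    (hcont : HasContent s τ ν) (hlat : LeftLatticeCond s τ) (J : ℕ) :
    ∀ t ≤ ν.length, (columnLabels s τ ν J t).foldl (fun T k => masonInsert k T)
        (prefixRows ν (countsDuringColumn s τ J 0) 0) =
      prefixRows ν (countsDuringColumn s τ J t) 0
  | 0, _ => rfl
  | t + 1, ht => by
    rw [columnLabels_succ, List.foldl_append,
      foldl_masonInsert_columnLabels hinj hcont hlat J t (by omega)]
    split_ifs with hocc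
    · exact masonInsert_stanLabel hinj hcont hlat (by omega) hocc
    · rw [countsDuringColumn_succ, Finset.not_nonempty_iff_eq_empty.1 hocc, Finset.card_empty,
        add_zero, Function.update_eq_self]
      rfl

lemma rectPartial_stanF (hpos : ∀ c ∈ s, 0 < τ c) (hinj : Set.InjOn (fun c => (τ c, c.2)) s)
    (hcont : HasContent s τ ν) (hlat : LeftLatticeCond s τ) :
    ∀ J, rectPartial s (stanF s τ) J = prefixRows ν (fun p => countLeft s τ (p + 1) J) 0
  | 0 => (prefixRows_eq_nil fun _ _ => countLeft_zero _).symm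
  | J + 1 => by
    have ih := rectPartial_stanF hpos hinj hcont hlat J
    rw [rectPartial, rectWord] at ih ⊢
    rw [List.range_succ, List.flatMap_append, List.foldl_append, ih, List.flatMap_singleton,
      colEntries_stanF hpos hcont, ← countsDuringColumn_zero,
      foldl_masonInsert_columnLabels hinj hcont hlat J _ le_rfl, countsDuringColumn_length hcont]

theorem rectRows_stanF (hpos : ∀ c ∈ s, 0 < τ c) (hinj : Set.InjOn (fun c => (τ c, c.2)) s)
    (hcont : HasContent s τ ν) (hlat : LeftLatticeCond s τ) (hν : IsComposition ν) :
    rectRows s (stanF s τ) = canonRows ν := by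
  have hwide : ∀ c ∈ s, c.2 < s.sup fun c => c.2 + 1 := fun c hc =>
    Nat.lt_of_succ_le (Finset.le_sup (f := fun c => c.2 + 1) hc)
  rw [rectRows, rectPartial_stanF hpos hinj hcont hlat,
    funext (countLeft_eq_getD hcont hwide)]
  exact prefixRows_getD_eq_canonRowsAux hν

end Rectification

end RectStan

lemma IsSSRCT.entry_ne_of_lt {α β : List ℕ} {τ : ℕ × ℕ → ℕ} (h : IsSSRCT α β τ) {i₁ i₂ y : ℕ}
    (hi : i₁ < i₂) (h₁ : (i₁, y) ∈ skewDiag α β) (h₂ : (i₂, y) ∈ skewDiag α β) :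
    τ (i₁, y) ≠ τ (i₂, y) := by
  rcases y with _ | k
  · exact (h.col_strict i₁ i₂ hi h₁ h₂).ne
  intro heq
  have hleft : (i₁, k) ∈ cdiag α := by
    have := (Finset.mem_sdiff.1 h₁).1
    simp only [cdiag, Finset.mem_filter, Finset.mem_product, Finset.mem_range] at this ⊢
    omega
  have hpremise : (i₁, k) ∈ innerDiag α β ∨
      ((i₁, k) ∈ skewDiag α β ∧ τ (i₂, k + 1) ≤ τ (i₁, k)) := by
    by_cases hin : (i₁, k) ∈ innerDiag α β
    · exact Or.inl hin
    · have hsk : (i₁, k) ∈ skewDiag α β := Finset.mem_sdiff.2 ⟨hleft, hin⟩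
      exact Or.inr ⟨hsk, heq ▸ h.row_weak i₁ k hsk h₁⟩
  rcases h.triple i₁ i₂ k hi h₂ hpremise with hin | ⟨-, hlt⟩
  · exact (Finset.mem_sdiff.1 h₁).2 hin
  · exact hlt.ne' heq

lemma IsSSRCT.injOn_entry_col {α β : List ℕ} {τ : ℕ × ℕ → ℕ} (h : IsSSRCT α β τ) :
    Set.InjOn (fun c => (τ c, c.2)) (skewDiag α β) := by
  rintro ⟨i₁, y⟩ h₁ ⟨i₂, y'⟩ h₂ heq
  obtain ⟨hv, rfl : y = y'⟩ := Prod.mk.inj heq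
  rcases lt_trichotomy i₁ i₂ with hi | rfl | hi
  · exact absurd hv (h.entry_ne_of_lt hi h₁ h₂)
  · rfl
  · exact absurd hv.symm (h.entry_ne_of_lt hi h₂ h₁)

theorem rect_stan_of_LRRCTl_general (α β ν : List ℕ)
    (hν : IsPartitionL ν)
    (τ : ℕ × ℕ → ℕ) (hτ : τ ∈ LRRCTlnu α β ν) :
    rectRows (skewDiag α β) (stanF (skewDiag α β) τ) = canonRows ν := by
  obtain ⟨⟨hssrct, hlat⟩, hcont⟩ := hτ
  exact RectStan.rectRows_stanF hssrct.pos_on hssrct.injOn_entry_col hcont hlat hν.1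

/-- every `τ ∈ LRRCT^l_ν(α//β)` satisfies `rect(stan(τ)) = τ_ν`. -/
theorem rect_stan_of_LRRCTl (α β ν : List ℕ)
    (hα : IsComposition α) (hβ : IsComposition β) (hlt : LtC β α)
    (hν : IsPartitionL ν) (hsize : ν.sum = (skewDiag α β).card)
    (τ : ℕ × ℕ → ℕ) (hτ : τ ∈ LRRCTlnu α β ν) :
    rectRows (skewDiag α β) (stanF (skewDiag α β) τ) = canonRows ν :=
  rect_stan_of_LRRCTl_general α β ν hν τ hτ
end

section
/- Let β <_c α be compositions with ℓ(β) = k and ℓ(α) = k+ℓ. If the upper shape of α//β is not a partition, i.e., α_j > α_{j−1} for some 2 ≤ j ≤ ℓ, then LRRCT^l_ν(α//β) is empty for every partition ν; consequently every element of LRRCT^l(α//β) has content that is not a partition. -/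
open Finset

/-! The rows above the inner shape are forced. Column strictness and the lattice condition pin the
first column of the upper shape to `1, 2, …, ℓ`, so (rows 0-indexed) row `m` of the upper shape has
entries `≤ m + 1`. Suppose `α_m < α_{m+1}`. The triple condition, propagated from the end of row `m`, gives
`τ (m, k) < τ (m + 1, k + 1)`, and then the lattice condition (equal entries lie in distinct
columns) forces, column by column, `τ (m, x) = m + 1` for every `x`: row `m` would be infinite. -/

lemma mem_cdiag_iff {γ : List ℕ} {i x : ℕ} :
    (i, x) ∈ cdiag γ ↔ i < γ.length ∧ x < γ.getD i 0 := by
  simp only [cdiag, mem_filter, mem_product, mem_range]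
  refine ⟨fun h => ⟨h.1.1, h.2⟩, fun h => ⟨⟨h.1, h.2.trans_le ?_⟩, h.2⟩⟩
  rw [List.getD_eq_getElem γ 0 h.1]
  exact List.le_sum_of_mem (List.getElem_mem h.1)

lemma mem_innerDiag_iff {α β : List ℕ} {i x : ℕ} :
    (i, x) ∈ innerDiag α β ↔
      α.length - β.length ≤ i ∧ (i - (α.length - β.length), x) ∈ cdiag β := by
  simp only [innerDiag, mem_image, Prod.mk.injEq]
  constructor
  · rintro ⟨⟨a, b⟩, hab, rfl, rfl⟩
    simpa using hab
  · rintro ⟨hi, hmem⟩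
    exact ⟨_, hmem, by omega, rfl⟩

lemma IsComposition.getD_pos {α : List ℕ} (hα : IsComposition α) {i : ℕ} (hi : i < α.length) :
    0 < α.getD i 0 := by
  rw [List.getD_eq_getElem α 0 hi]
  exact hα _ (List.getElem_mem hi)

section SkewDiag

variable {α β : List ℕ} {i x : ℕ}

lemma notMem_innerDiag_of_lt (hi : i < α.length - β.length) : (i, x) ∉ innerDiag α β :=
  fun h => by have := (mem_innerDiag_iff.mp h).1; omega

lemma mem_skewDiag_iff_of_lt (hi : i < α.length - β.length) :
    (i, x) ∈ skewDiag α β ↔ x < α.getD i 0 := by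
  rw [skewDiag, mem_sdiff, mem_cdiag_iff]
  exact ⟨fun h => h.1.2, fun hx => ⟨⟨by omega, hx⟩, notMem_innerDiag_of_lt hi⟩⟩

lemma mem_skewDiag_zero_of_lt (hα : IsComposition α) (hi : i < α.length - β.length) :
    (i, 0) ∈ skewDiag α β :=
  (mem_skewDiag_iff_of_lt hi).mpr (hα.getD_pos (by omega))

lemma mem_skewDiag_of_le_of_le {y z : ℕ} (hx : (i, x) ∈ skewDiag α β)
    (hz : (i, z) ∈ skewDiag α β) (hxy : x ≤ y) (hyz : y ≤ z) : (i, y) ∈ skewDiag α β := by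
  rw [skewDiag, mem_sdiff, mem_cdiag_iff, mem_innerDiag_iff, mem_cdiag_iff] at hx hz ⊢
  exact ⟨⟨hz.1.1, by omega⟩, fun hy => hx.2 ⟨hy.1, hy.2.1, by omega⟩⟩

lemma mem_cdiag_of_mem_skewDiag_succ (h : (i, x + 1) ∈ skewDiag α β) : (i, x) ∈ cdiag α := by
  have := (mem_sdiff.mp h).1
  rw [mem_cdiag_iff] at this ⊢
  omega

end SkewDiag

namespace LeftLatticeCond

variable {s : Finset (ℕ × ℕ)} {τ : ℕ × ℕ → ℕ} {w : ℕ}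

lemma exists_apply_eq_of_le (hlat : LeftLatticeCond s τ) (hw : 1 ≤ w) {c : ℕ × ℕ}
    (hc : c ∈ s) (hcw : τ c = w + 1) : ∃ d ∈ s, τ d = w ∧ d.2 ≤ c.2 := by
  have hpos : 0 < (s.filter fun d => τ d = w + 1 ∧ d.2 ≤ c.2).card :=
    card_pos.mpr ⟨c, mem_filter.mpr ⟨hc, hcw, le_rfl⟩⟩
  obtain ⟨d, hd⟩ := card_pos.mp (hpos.trans_le (hlat w hw c.2))
  exact ⟨d, (mem_filter.mp hd).1, (mem_filter.mp hd).2⟩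

/-- If `w + 1` occurs in each of the columns `0, …, x`, then the `x + 1` copies of `w + 1` in
those columns need `x + 1` copies of `w` there, which fit only if one lies in column `x`. -/
lemma exists_apply_eq_of_forall_le (hlat : LeftLatticeCond s τ)
    (hcol : ∀ i i' x, (i, x) ∈ s → (i', x) ∈ s → τ (i, x) = τ (i', x) → i = i')
    (hw : 1 ≤ w) {x : ℕ} (hocc : ∀ y ≤ x, ∃ i, (i, y) ∈ s ∧ τ (i, y) = w + 1) :
    ∃ i, (i, x) ∈ s ∧ τ (i, x) = w := by
  by_contra! hnone
  have hupper : x + 1 ≤ (s.filter fun c => τ c = w + 1 ∧ c.2 ≤ x).card := by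
    have hsurj : Set.SurjOn (Prod.snd : ℕ × ℕ → ℕ) ↑(s.filter fun c => τ c = w + 1 ∧ c.2 ≤ x)
        ((range (x + 1) : Finset ℕ) : Set ℕ) := by
      intro y hy
      obtain ⟨i, hi, hiw⟩ := hocc y (Nat.lt_succ_iff.mp (mem_range.mp hy))
      exact ⟨(i, y), mem_filter.mpr ⟨hi, hiw, Nat.lt_succ_iff.mp (mem_range.mp hy)⟩, rfl⟩
    simpa using card_le_card_of_surjOn _ hsurj
  have hlower : (s.filter fun c => τ c = w ∧ c.2 ≤ x).card ≤ x := by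
    have hmaps : Set.MapsTo (Prod.snd : ℕ × ℕ → ℕ) ↑(s.filter fun c => τ c = w ∧ c.2 ≤ x) ((range x : Finset ℕ) : Set ℕ) := by
      rintro ⟨i, y⟩ hc
      obtain ⟨hi, hiw, hy⟩ := mem_filter.mp hc
      exact mem_range.mpr (lt_of_le_of_ne hy fun h => hnone i (h ▸ hi) (h ▸ hiw))
    have hinj : Set.InjOn (Prod.snd : ℕ × ℕ → ℕ) ↑(s.filter fun c => τ c = w ∧ c.2 ≤ x) := by
      rintro ⟨i, y⟩ hc ⟨i', y'⟩ hc' (rfl : y = y')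
      obtain ⟨hi, hiw, -⟩ := mem_filter.mp hc
      obtain ⟨hi', hi'w, -⟩ := mem_filter.mp hc'
      rw [hcol i i' y hi hi' (hiw.trans hi'w.symm)]
    simpa using card_le_card_of_injOn _ hmaps hinj
  have := hlat w hw x
  omega

end LeftLatticeCond

namespace IsSSRCT

variable {α β : List ℕ} {τ : ℕ × ℕ → ℕ}

lemma apply_le_apply_of_le (hτ : IsSSRCT α β τ) {i x y : ℕ} (hx : (i, x) ∈ skewDiag α β)
    (hy : (i, y) ∈ skewDiag α β) (hxy : x ≤ y) : τ (i, y) ≤ τ (i, x) := by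
  induction y, hxy using Nat.le_induction with
  | base => exact le_rfl
  | succ y hxy ih =>
    have hy' := mem_skewDiag_of_le_of_le hx hy hxy y.le_succ
    exact (hτ.row_weak i y hy' hy).trans (ih hy')

lemma eq_of_apply_eq (hτ : IsSSRCT α β τ) {i i' x : ℕ} (h : (i, x) ∈ skewDiag α β)
    (h' : (i', x) ∈ skewDiag α β) (heq : τ (i, x) = τ (i', x)) : i = i' := by
  suffices key : ∀ {i i'}, i < i' → (i, x) ∈ skewDiag α β → (i', x) ∈ skewDiag α β →
      τ (i, x) ≠ τ (i', x) by
    rcases lt_trichotomy i i' with hlt | rfl | hlt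
    · exact absurd heq (key hlt h h')
    · rfl
    · exact absurd heq.symm (key hlt h' h)
  intro i i' hlt h h' heq
  cases x with
  | zero => exact (hτ.col_strict i i' hlt h h').ne heq
  | succ k =>
    have hleft : (i, k) ∈ innerDiag α β ∨
        ((i, k) ∈ skewDiag α β ∧ τ (i', k + 1) ≤ τ (i, k)) := by
      by_cases hin : (i, k) ∈ innerDiag α β
      · exact Or.inl hin
      · have hk : (i, k) ∈ skewDiag α β :=
          mem_sdiff.mpr ⟨mem_cdiag_of_mem_skewDiag_succ h, hin⟩
        exact Or.inr ⟨hk, heq ▸ hτ.row_weak i k hk h⟩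
    rcases hτ.triple i i' k hlt h' hleft with hin | ⟨-, hlt'⟩
    · exact (mem_sdiff.mp h).2 hin
    · omega

lemma le_apply_zero (hτ : IsSSRCT α β τ) (hα : IsComposition α) {i : ℕ}
    (hi : i < α.length - β.length) : i + 1 ≤ τ (i, 0) := by
  induction i with
  | zero => exact hτ.pos_on _ (mem_skewDiag_zero_of_lt hα hi)
  | succ i ih =>
    have := hτ.col_strict i (i + 1) i.lt_succ_self (mem_skewDiag_zero_of_lt hα (by omega))
      (mem_skewDiag_zero_of_lt hα hi)
    have := ih (by omega)
    omega

/-- If `τ (i', k + 1) ≤ τ (i, k)`, the triple condition pushes the same inequality one column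
to the right, and it would run past the end of row `i`. -/
lemma apply_lt_apply_succ (hτ : IsSSRCT α β τ) {i i' k : ℕ} (hii' : i < i')
    (hi' : i' < α.length - β.length) (hlt : α.getD i 0 < α.getD i' 0) (hk : k < α.getD i 0) :
    τ (i, k) < τ (i', k + 1) := by
  have hi : i < α.length - β.length := by omega
  by_contra! hle
  have hchain : ∀ n, (i, k + n) ∈ skewDiag α β ∧ τ (i', k + n + 1) ≤ τ (i, k + n) := by
    intro n
    induction n with
    | zero => exact ⟨(mem_skewDiag_iff_of_lt hi).mpr hk, hle⟩
    | succ n ih =>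
      have hkn := (mem_skewDiag_iff_of_lt hi).mp ih.1
      have hmem : (i', k + n + 1) ∈ skewDiag α β := (mem_skewDiag_iff_of_lt hi').mpr (by omega)
      rcases hτ.triple i i' (k + n) hii' hmem (Or.inr ih) with hin | ⟨hmem', hlt'⟩
      · exact absurd hin (notMem_innerDiag_of_lt hi)
      · have hkn' := (mem_skewDiag_iff_of_lt hi).mp hmem'
        have hnext : (i', k + n + 2) ∈ skewDiag α β :=
          (mem_skewDiag_iff_of_lt hi').mpr (by omega)
        exact ⟨hmem', (hτ.row_weak i' (k + n + 1) hmem hnext).trans hlt'.le⟩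
  have := (mem_skewDiag_iff_of_lt hi).mp (hchain (α.getD i 0)).1
  omega

end IsSSRCT

section LRRCTl

variable {α β : List ℕ} {τ : ℕ × ℕ → ℕ}

lemma apply_zero_le_of_mem_LRRCTl (hτ : τ ∈ LRRCTl α β) {i : ℕ}
    (hi : (i, 0) ∈ skewDiag α β) : τ (i, 0) ≤ i + 1 := by
  obtain ⟨hss, hlat⟩ := hτ
  induction i using Nat.strong_induction_on with
  | _ i ih =>
    by_contra! hgt
    obtain ⟨⟨i', y⟩, hd, hdw, hy⟩ :=
      hlat.exists_apply_eq_of_le (w := τ (i, 0) - 1) (by omega) hi (by omega)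
    obtain rfl : y = 0 := Nat.le_zero.mp hy
    have hi'i : i' < i := by
      by_contra! hle
      rcases hle.lt_or_eq with hlt | rfl
      · have := hss.col_strict i i' hlt hi hd
        omega
      · omega
    have := ih i' hi'i hd
    omega

lemma apply_zero_eq_of_mem_LRRCTl (hτ : τ ∈ LRRCTl α β) (hα : IsComposition α) {i : ℕ}
    (hi : i < α.length - β.length) : τ (i, 0) = i + 1 :=
  le_antisymm (apply_zero_le_of_mem_LRRCTl hτ (mem_skewDiag_zero_of_lt hα hi))
    (hτ.1.le_apply_zero hα hi)

lemma apply_le_of_mem_LRRCTl (hτ : τ ∈ LRRCTl α β) (hα : IsComposition α) {i x : ℕ}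
    (hi : i < α.length - β.length) (hx : (i, x) ∈ skewDiag α β) : τ (i, x) ≤ i + 1 :=
  apply_zero_eq_of_mem_LRRCTl hτ hα hi ▸
    hτ.1.apply_le_apply_of_le (mem_skewDiag_zero_of_lt hα hi) hx x.zero_le

/-- Row `m + 1` carries `m + 2` in columns `0, …, x + 1`, so some `m + 1` sits in column `x + 1`;
rows above `m` hold smaller entries, and the triple condition rules out the rows below it. -/
lemma mem_skewDiag_succ_of_apply_eq (hτ : τ ∈ LRRCTl α β) (hα : IsComposition α) {m x : ℕ}
    (hm : m + 1 < α.length - β.length) (hlt : α.getD m 0 < α.getD (m + 1) 0)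
    (hx : (m, x) ∈ skewDiag α β) (hτx : τ (m, x) = m + 1) :
    (m, x + 1) ∈ skewDiag α β ∧ τ (m, x + 1) = m + 1 := by
  have hm0 : m < α.length - β.length := by omega
  have hxlt := (mem_skewDiag_iff_of_lt hm0).mp hx
  have hrow : ∀ y ≤ x, τ (m, y) = m + 1 := fun y hy => by
    have hy' : (m, y) ∈ skewDiag α β := (mem_skewDiag_iff_of_lt hm0).mpr (by omega)
    exact le_antisymm (apply_le_of_mem_LRRCTl hτ hα hm0 hy')
      (hτx ▸ hτ.1.apply_le_apply_of_le hy' hx hy)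
  have hrow_succ : ∀ y ≤ x + 1, (m + 1, y) ∈ skewDiag α β ∧ τ (m + 1, y) = m + 1 + 1 := by
    intro y hy
    have hmem : (m + 1, y) ∈ skewDiag α β := (mem_skewDiag_iff_of_lt hm).mpr (by omega)
    refine ⟨hmem, ?_⟩
    cases y with
    | zero => exact apply_zero_eq_of_mem_LRRCTl hτ hα hm
    | succ z =>
      have h1 := hτ.1.apply_lt_apply_succ (Nat.lt_add_one m) hm hlt (k := z) (by omega)
      have h2 := apply_le_of_mem_LRRCTl hτ hα hm hmem
      rw [hrow z (by omega)] at h1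
      omega
  obtain ⟨i, hi, hiτ⟩ := hτ.2.exists_apply_eq_of_forall_le
    (fun _ _ _ => hτ.1.eq_of_apply_eq) (by omega) fun y hy => ⟨m + 1, hrow_succ y hy⟩
  have hmi : m ≤ i := by
    rcases lt_or_ge i (α.length - β.length) with hiℓ | hiℓ
    · have := apply_le_of_mem_LRRCTl hτ hα hiℓ hi
      omega
    · omega
  rcases hmi.eq_or_lt with rfl | hmi
  · exact ⟨hi, hiτ⟩
  · rcases hτ.1.triple m i x hmi hi (Or.inr ⟨hx, by omega⟩) with hin | ⟨hmem, hlt'⟩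
    · exact absurd hin (notMem_innerDiag_of_lt hm0)
    · have := apply_le_of_mem_LRRCTl hτ hα hm0 hmem
      omega

theorem LRRCTl_eq_empty_of_getD_lt (hα : IsComposition α) {m : ℕ}
    (hm : m + 1 < α.length - β.length) (hlt : α.getD m 0 < α.getD (m + 1) 0) :
    LRRCTl α β = ∅ := by
  refine Set.eq_empty_iff_forall_notMem.mpr fun τ hτ => ?_
  have hm0 : m < α.length - β.length := by omega
  have hrow : ∀ x, (m, x) ∈ skewDiag α β ∧ τ (m, x) = m + 1 := by
    intro x
    induction x with
    | zero => exact ⟨mem_skewDiag_zero_of_lt hα hm0, apply_zero_eq_of_mem_LRRCTl hτ hα hm0⟩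
    | succ x ih => exact mem_skewDiag_succ_of_apply_eq hτ hα hm hlt ih.1 ih.2
  have := (mem_skewDiag_iff_of_lt hm0).mp (hrow (α.getD m 0)).1
  omega

end LRRCTl

theorem LRRCTl_empty_of_not_partition_general (α β : List ℕ)
    (hα : IsComposition α)
    (j : ℕ) (h2 : 2 ≤ j) (hjl : j ≤ α.length - β.length)
    (hgt : α.getD (j - 2) 0 < α.getD (j - 1) 0) :
    (∀ ν, IsPartitionL ν → LRRCTlnu α β ν = ∅) ∧
    ∀ τ ∈ LRRCTl α β, ∀ ν, IsPartitionL ν → ¬ HasContent (skewDiag α β) τ ν := by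
  obtain ⟨m, rfl⟩ : ∃ m, j = m + 2 := ⟨j - 2, by omega⟩
  have hempty : LRRCTl α β = ∅ :=
    LRRCTl_eq_empty_of_getD_lt hα (m := m) (by omega) (by simpa using hgt)
  refine ⟨fun ν _ => Set.eq_empty_of_subset_empty fun τ hτ => hempty ▸ hτ.1, fun τ hτ => ?_⟩
  simp [hempty] at hτ

/-- if the upper shape of `α//β` is not a partition, i.e.
`α_j > α_{j-1}` for some `2 ≤ j ≤ ℓ` (parts 1-indexed, `ℓ = ℓ(α) - ℓ(β)`), then
`LRRCT^l_ν(α//β)` is empty for every partition `ν`; consequently every element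
of `LRRCT^l(α//β)` has content that is not a partition. -/
theorem LRRCTl_empty_of_not_partition (α β : List ℕ)
    (hα : IsComposition α) (hβ : IsComposition β) (hlt : LtC β α)
    (j : ℕ) (h2 : 2 ≤ j) (hjl : j ≤ α.length - β.length)
    (hgt : α.getD (j - 2) 0 < α.getD (j - 1) 0) :
    (∀ ν, IsPartitionL ν → LRRCTlnu α β ν = ∅) ∧
    ∀ τ ∈ LRRCTl α β, ∀ ν, IsPartitionL ν → ¬ HasContent (skewDiag α β) τ ν :=
  LRRCTl_empty_of_not_partition_general α β hα j h2 hjl hgt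
end
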